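/- Let L be a finite-dimensional filiform Lie algebra over a field F of characteristic different from 2. If L is a CB-algebra, then dim L ≤ 3. -/

import Mathlib

/-!
Taking `y = x` in the CB condition gives `ad x ^ 2 = 0` for every `x`, i.e. `L` is 2-Engel.
Polarising, `ad x` and `ad y` anticommute, so `ad x ∘ ad y` commutes with every `ad z`; hence
`ad ⁅⁅a, b⁆, c⁆ = 0` and `L³` is central. Then `(x, y, z) ↦ ⁅x, ⁅y, z⁆⁆` is alternating and
vanishes as soon as one argument lies in `L²`, so it factors through `L / L²`. For a filiform `L`
of dimension at least 4 that quotient is 2-dimensional, which forces `L³ = 0`, whereas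
`dim L³ = dim L - 3 > 0`.
-/

theorem Submodule.exists_sup_span_pair_eq_top {K V : Type*} [DivisionRing K] [AddCommGroup V]
    [Module K V] {S : Submodule K V} (h : Module.finrank K (V ⧸ S) = 2) :
    ∃ u v : V, S ⊔ span K {u, v} = ⊤ := by
  have : Module.Finite K (V ⧸ S) := Module.finite_of_finrank_pos (by omega)
  let b := Module.finBasisOfFinrankEq K (V ⧸ S) h
  obtain ⟨u, hu⟩ := S.mkQ_surjective (b 0)
  obtain ⟨v, hv⟩ := S.mkQ_surjective (b 1)
  refine ⟨u, v, (map_mkQ_eq_top S _).mp (eq_top_iff.mpr ?_)⟩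
  rw [map_span, Set.image_pair, hu, hv, ← b.span_eq]
  refine span_mono ?_
  rintro _ ⟨i, rfl⟩
  fin_cases i <;> simp

namespace LieRing

variable {L : Type*} [LieRing L]

def IsCB (L : Type*) [LieRing L] : Prop :=
  ∀ x y : L, ⁅x, y⁆ = 0 → ∀ z : L, ⁅⁅x, z⁆, y⁆ = 0

def IsTwoEngel (L : Type*) [LieRing L] : Prop :=
  ∀ x y : L, ⁅x, ⁅x, y⁆⁆ = 0

theorem IsCB.isTwoEngel (h : IsCB L) : IsTwoEngel L := fun x y => by
  rw [← lie_skew, h x x (lie_self x) y, neg_zero]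

namespace IsTwoEngel

theorem lie_lie_anticomm (h : IsTwoEngel L) (x y z : L) : ⁅x, ⁅y, z⁆⁆ = -⁅y, ⁅x, z⁆⁆ := by
  have hxy := h (x + y) z
  simp only [add_lie, lie_add, h x z, h y z, zero_add, add_zero] at hxy
  exact eq_neg_of_add_eq_zero_right hxy

theorem lie_lie_eq_two_nsmul (h : IsTwoEngel L) (x y z : L) :
    ⁅⁅x, y⁆, z⁆ = 2 • ⁅x, ⁅y, z⁆⁆ := by
  rw [lie_lie, h.lie_lie_anticomm y x z, sub_neg_eq_add, two_nsmul]

theorem lie_lie_lie_lie_eq_zero (h : IsTwoEngel L) (a b c z : L) : ⁅⁅⁅a, b⁆, c⁆, z⁆ = 0 := by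
  rw [lie_lie, h.lie_lie_eq_two_nsmul, h.lie_lie_eq_two_nsmul, lie_nsmul,
    h.lie_lie_anticomm c a, h.lie_lie_anticomm c b, lie_neg, neg_neg, sub_self]

variable {R : Type*} [CommRing R] [LieAlgebra R L]

open LieModule LieSubmodule

theorem lowerCentralSeries_two_le_center (h : IsTwoEngel L) :
    lowerCentralSeries R L L 2 ≤ LieAlgebra.center R L := by
  rw [← ucs_eq_top_iff, eq_top_iff]
  intro m _
  simp only [ucs_succ, ucs_zero, mem_normalizer, mem_maxTrivSubmodule]
  intro x y z
  rw [← lie_skew z ⁅y, ⁅x, m⁆⁆, ← lie_skew y ⁅x, m⁆, neg_lie, neg_neg,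
    h.lie_lie_lie_lie_eq_zero]

theorem lie_mem_center_of_mem_lowerCentralSeries_one (h : IsTwoEngel L) {w : L}
    (hw : w ∈ lowerCentralSeries R L L 1) (z : L) : ⁅w, z⁆ ∈ LieAlgebra.center R L := by
  apply h.lowerCentralSeries_two_le_center
  rw [← lie_skew, lowerCentralSeries_succ]
  exact neg_mem (lie_mem_lie (mem_top z) hw)

theorem lie_lie_eq_zero_of_mem_middle (h : IsTwoEngel L) {w : L}
    (hw : w ∈ lowerCentralSeries R L L 1) (x z : L) : ⁅x, ⁅w, z⁆⁆ = 0 :=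
  (mem_maxTrivSubmodule R L L _).mp (h.lie_mem_center_of_mem_lowerCentralSeries_one hw z) x

theorem lie_lie_eq_zero_of_mem_right (h : IsTwoEngel L) {w : L}
    (hw : w ∈ lowerCentralSeries R L L 1) (x y : L) : ⁅x, ⁅y, w⁆⁆ = 0 := by
  rw [← lie_skew y w, lie_neg, h.lie_lie_eq_zero_of_mem_middle hw, neg_zero]

theorem lie_lie_eq_zero_of_mem_left (h : IsTwoEngel L) {w : L}
    (hw : w ∈ lowerCentralSeries R L L 1) (y z : L) : ⁅w, ⁅y, z⁆⁆ = 0 := by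
  rw [leibniz_lie, ← lie_skew, h.lie_lie_eq_zero_of_mem_middle hw,
    h.lie_lie_eq_zero_of_mem_middle hw, neg_zero, add_zero]

theorem lowerCentralSeries_two_eq_bot (h : IsTwoEngel L) {u v : L}
    (huv : (lowerCentralSeries R L L 1).toSubmodule ⊔ Submodule.span R {u, v} = ⊤) :
    lowerCentralSeries R L L 2 = ⊥ := by
  have hdec : ∀ a : L, ∃ w ∈ lowerCentralSeries R L L 1, ∃ α β : R, a = w + (α • u + β • v) := by
    intro a
    obtain ⟨w, hw, _, hp, rfl⟩ := Submodule.mem_sup.mp (huv ▸ Submodule.mem_top : a ∈ _)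
    obtain ⟨α, β, rfl⟩ := Submodule.mem_span_pair.mp hp
    exact ⟨w, hw, α, β, rfl⟩
  have huvu : ⁅u, ⁅v, u⁆⁆ = 0 := by rw [h.lie_lie_anticomm, lie_self, lie_zero, neg_zero]
  have hvuv : ⁅v, ⁅u, v⁆⁆ = 0 := by rw [h.lie_lie_anticomm, lie_self, lie_zero, neg_zero]
  rw [_root_.eq_bot_iff, ← ucs_eq_top_iff, eq_top_iff]
  intro m _
  simp only [ucs_succ, ucs_zero, mem_normalizer, mem_bot]
  intro x y
  obtain ⟨w₁, hw₁, α₁, β₁, rfl⟩ := hdec y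
  obtain ⟨w₂, hw₂, α₂, β₂, rfl⟩ := hdec x
  obtain ⟨w₃, hw₃, α₃, β₃, rfl⟩ := hdec m
  simp only [lie_add, add_lie, lie_smul, smul_lie, h.lie_lie_eq_zero_of_mem_left hw₁,
    h.lie_lie_eq_zero_of_mem_middle hw₂, h.lie_lie_eq_zero_of_mem_right hw₃, h u, h v, lie_self,
    huvu, hvuv, lie_zero, smul_zero, add_zero]

end IsTwoEngel
end LieRing

theorem stmt_14 (F : Type*) [Field F]
    (L : Type*) [LieRing L] [LieAlgebra F L]
    (hfil : ∀ i : ℕ, 2 ≤ i →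
      Module.finrank F (LieModule.lowerCentralSeries F L L (i - 1) : LieSubmodule F L L)
        = Module.finrank F L - i)
    (hcb : ∀ x y : L, ⁅x, y⁆ = 0 → ∀ z : L, ⁅⁅x, z⁆, y⁆ = 0) :
    Module.finrank F L ≤ 3 := by
  by_contra! hn
  have : FiniteDimensional F L := Module.finite_of_finrank_pos (by omega)
  have hquot : Module.finrank F (L ⧸ (LieModule.lowerCentralSeries F L L 1).toSubmodule) = 2 := by
    have hL2 : Module.finrank F (LieModule.lowerCentralSeries F L L 1).toSubmodule
        = Module.finrank F L - 2 := hfil 2 le_rfl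
    have := (LieModule.lowerCentralSeries F L L 1).toSubmodule.finrank_quotient_add_finrank
    omega
  obtain ⟨u, v, huv⟩ := Submodule.exists_sup_span_pair_eq_top hquot
  have hL3 := hfil 3 (by norm_num)
  rw [show 3 - 1 = 2 from rfl,
    (LieRing.IsCB.isTwoEngel hcb).lowerCentralSeries_two_eq_bot huv] at hL3
  have hbot : Module.finrank F (⊥ : LieIdeal F L) = 0 := finrank_bot F L
  omega
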